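/- arXiv:2102.10851 — 5 statements merged into one kernel-verified Lean document; each statement's English description precedes it below -/
import Mathlib

section
/- Fix a natural number s. The family of functions (G_{s,j})_{j ∈ ℤ}, where G_{s,j} : D → ℂ is defined by G_{s,j}(x) = g(x)^(s−j) · h(x)^j on the domain D = ℂ \ {0, 1, −1, i, −i}, is linearly independent over ℂ. -/
/-- `g(x) = (x + x⁻¹)/2` -/
noncomputable def g (x : ℂ) : ℂ := (x + x⁻¹) / 2

/-- `h(x) = (x - x⁻¹)/2` -/
noncomputable def h (x : ℂ) : ℂ := (x - x⁻¹) / 2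

/-- The common domain `D = ℂ \ {0, 1, -1, i, -i}`. -/
def D : Set ℂ := ({0, 1, -1, Complex.I, -Complex.I} : Set ℂ)ᶜ

/-!
Write `t = h / g`, so that `G_{s,j} = g ^ s * t ^ j` and `t x = (x² - 1) / (x² + 1)`. On `D` both `g`
and `t` are nowhere zero, hence units of the algebra of functions `D → ℂ`, and `t` takes infinitely
many values, so no nonzero polynomial kills it: `t` is transcendental over `ℂ`. A finite relation
among integer powers of a transcendental unit becomes, after multiplication by a large power of it,
a polynomial relation, so the `t ^ j` are independent, and multiplying by the unit `g ^ s` preserves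
this.
-/

theorem Transcendental.linearIndependent_pow {K A : Type*} [CommRing K] [Ring A] [Algebra K A]
    {x : A} (hx : Transcendental K x) : LinearIndependent K (fun n : ℕ => x ^ n) := by
  have := (Polynomial.basisMonomials K).linearIndependent.map' (Polynomial.aeval x).toLinearMap
    (LinearMap.ker_eq_bot.mpr (transcendental_iff_injective.mp hx))
  simpa [Function.comp_def] using this

theorem LinearIndependent.units_mul {ι K A : Type*} [CommRing K] [Ring A] [Algebra K A]
    {v : ι → A} (hv : LinearIndependent K v) (u : Aˣ) :
    LinearIndependent K (fun i => (u : A) * v i) :=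
  hv.map' (LinearMap.mulLeft K (u : A)) (LinearMap.ker_eq_bot.mpr u.isUnit.isRegular.left)

theorem Transcendental.linearIndependent_zpow {K A : Type*} [CommRing K] [Ring A] [Algebra K A]
    {x : Aˣ} (hx : Transcendental K (x : A)) :
    LinearIndependent K (fun j : ℤ => ((x ^ j : Aˣ) : A)) := by
  rw [linearIndependent_iff_finset_linearIndependent]
  intro S
  obtain ⟨n, hn⟩ : ∃ n : ℕ, ∀ j ∈ S, -(n : ℤ) ≤ j :=
    ⟨S.sup Int.natAbs, fun j hj => by
      have : j.natAbs ≤ S.sup Int.natAbs := Finset.le_sup hj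
      omega⟩
  have hshift : Function.Injective (fun j : S => (j + n : ℤ).toNat) := by
    intro i j hij
    have := hn i i.2
    have := hn j j.2
    ext
    simp only at hij
    omega
  convert (hx.linearIndependent_pow.comp _ hshift).units_mul (x ^ (-(n : ℤ))) using 1
  funext j
  have hj : ((j + n : ℤ).toNat : ℤ) = j + n := Int.toNat_of_nonneg (by have := hn j j.2; omega)
  simp only [Function.comp_apply]
  rw [← Units.val_pow_eq_pow_val, ← Units.val_mul, ← zpow_natCast, hj, ← zpow_add]
  congr 2
  ring

theorem transcendental_of_infinite_range {X K : Type*} [CommRing K] [IsDomain K] {t : X → K}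
    (ht : (Set.range t).Infinite) : Transcendental K t := by
  rw [transcendental_iff]
  intro p hp
  refine p.eq_zero_of_infinite_isRoot (ht.mono ?_)
  rintro _ ⟨x, rfl⟩
  simpa using congrFun hp x

theorem mem_D_iff {x : ℂ} : x ∈ D ↔ x ≠ 0 ∧ x ^ 2 ≠ 1 ∧ x ^ 2 ≠ -1 := by
  have hI : x ^ 2 = -1 ↔ x = Complex.I ∨ x = -Complex.I := by
    rw [← Complex.I_sq, sq_eq_sq_iff_eq_or_eq_neg]
  simp only [D, Set.mem_compl_iff, Set.mem_insert_iff, Set.mem_singleton_iff, ne_eq,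
    sq_eq_one_iff, hI]
  tauto

theorem g_eq {x : ℂ} (hx : x ≠ 0) : g x = (x ^ 2 + 1) / (2 * x) := by
  rw [g]; field_simp

theorem h_eq {x : ℂ} (hx : x ≠ 0) : h x = (x ^ 2 - 1) / (2 * x) := by
  rw [h]; field_simp

theorem g_ne_zero {x : ℂ} (hx : x ∈ D) : g x ≠ 0 := by
  obtain ⟨hx0, -, hx2⟩ := mem_D_iff.mp hx
  rw [g_eq hx0]
  exact div_ne_zero (by rwa [Ne, add_eq_zero_iff_eq_neg]) (by simpa using hx0)

theorem h_ne_zero {x : ℂ} (hx : x ∈ D) : h x ≠ 0 := by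
  obtain ⟨hx0, hx1, -⟩ := mem_D_iff.mp hx
  rw [h_eq hx0]
  exact div_ne_zero (sub_ne_zero.mpr hx1) (by simpa using hx0)

theorem h_div_g {x : ℂ} (hx : x ≠ 0) : h x / g x = (x ^ 2 - 1) / (x ^ 2 + 1) := by
  rw [g_eq hx, h_eq hx, div_div_div_cancel_right₀ (by simpa using hx)]

theorem natCast_add_two_mem_D (n : ℕ) : ((n + 2 : ℕ) : ℂ) ∈ D := by
  refine mem_D_iff.mpr ⟨Nat.cast_ne_zero.mpr (by omega), ?_, ?_⟩
  · exact_mod_cast (Nat.one_lt_pow two_ne_zero (by omega : 1 < n + 2)).ne'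
  · rw [Ne, eq_neg_iff_add_eq_zero]
    exact_mod_cast Nat.succ_ne_zero ((n + 2) ^ 2)

theorem infinite_range_h_div_g : (Set.range fun x : D => h x / g x).Infinite := by
  let p : ℕ → D := fun n => ⟨(n + 2 : ℕ), natCast_add_two_mem_D n⟩
  refine (Set.infinite_range_of_injective (f := fun n => h (p n) / g (p n)) ?_).mono
    (Set.range_comp_subset_range p _)
  intro m n hmn
  simp only [p, h_div_g (mem_D_iff.mp (natCast_add_two_mem_D _)).1] at hmn
  rw [div_eq_div_iff (by exact_mod_cast Nat.succ_ne_zero ((m + 2) ^ 2))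
    (by exact_mod_cast Nat.succ_ne_zero ((n + 2) ^ 2))] at hmn
  have hsq : ((m + 2 : ℕ) : ℂ) ^ 2 = ((n + 2 : ℕ) : ℂ) ^ 2 := by linear_combination hmn / 2
  have := Nat.pow_left_injective two_ne_zero (by exact_mod_cast hsq : (m + 2) ^ 2 = (n + 2) ^ 2)
  omega

/-- For each fixed `s`, the family `(G_{s,j})_{j ∈ ℤ}`, `G_{s,j}(x) = g(x)^(s-j) · h(x)^j`,
is linearly independent in the ℂ-vector space of functions `D → ℂ`. -/
theorem stmt1 (s : ℕ) :
    LinearIndependent ℂ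
      (fun (j : ℤ) => (fun x : D => g (x : ℂ) ^ ((s : ℤ) - j) * h (x : ℂ) ^ j)) := by
  have hg : IsUnit (fun x : D => g x) := Pi.isUnit_iff.mpr fun x => (g_ne_zero x.2).isUnit
  have ht : IsUnit (fun x : D => h x / g x) :=
    Pi.isUnit_iff.mpr fun x => (div_ne_zero (h_ne_zero x.2) (g_ne_zero x.2)).isUnit
  have htr : Transcendental ℂ (ht.unit : D → ℂ) := by
    rw [ht.unit_spec]; exact transcendental_of_infinite_range infinite_range_h_div_g
  have hfam : (fun (j : ℤ) (x : D) => g (x : ℂ) ^ ((s : ℤ) - j) * h (x : ℂ) ^ j) =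
      fun j => ((hg.unit ^ (s : ℤ) : (D → ℂ)ˣ) : D → ℂ) * ((ht.unit ^ j : (D → ℂ)ˣ) : D → ℂ) := by
    funext j x
    simp only [Units.val_zpow_eq_zpow_val, ht.unit_spec, hg.unit_spec, Pi.mul_apply, Pi.pow_apply]
    rw [div_zpow, zpow_sub₀ (g_ne_zero x.2)]
    field_simp
  rw [hfam]
  exact htr.linearIndependent_zpow.units_mul _
end

section
/- For all natural numbers s, r and every real number t, the r-th derivative of the function t ↦ (cosh t)^s satisfies: iteratedDeriv r (fun t => (cosh t)^s) t = Σ_{j=0}^{r} A(s,r,j) · (cosh t)^(s−j) · (sinh t)^j, where the exponent s − j is an integer exponent (zpow, legitimate since cosh t > 0 for real t). -/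
/-! Differentiating `cosh ^ (s - j) * sinh ^ j` gives
`(s - j) cosh ^ (s - j - 1) sinh ^ (j + 1) + j cosh ^ (s - j + 1) sinh ^ (j - 1)`: one step up and one
step down in `j`. Collecting the coefficient of each monomial after these shifts is exactly the
recursion defining `A`; the boundary terms of the shifted sums vanish because `A(s,r,j) = 0`
outside `0 ≤ j ≤ r`. -/

/-- The triangular array `A(s,r,j)`: `A(s,0,j) = δ_{j,0}` and
`A(s,r+1,j) = (s-(j-1))·A(s,r,j-1) + (j+1)·A(s,r,j+1)`. -/
def A (s : ℕ) : ℕ → ℤ → ℤ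
  | 0, j => if j = 0 then 1 else 0
  | r + 1, j => ((s : ℤ) - (j - 1)) * A s r (j - 1) + (j + 1) * A s r (j + 1)

open Finset Real

theorem A_eq_zero (s r : ℕ) {j : ℤ} (hj : j < 0 ∨ (r : ℤ) < j) : A s r j = 0 := by
  induction r generalizing j with
  | zero => simp only [A]; exact if_neg (by omega)
  | succ r ih =>
    have below : A s r (j - 1) = 0 := ih (by omega)
    rcases eq_or_ne (j + 1) 0 with hj' | hj'
    · simp only [A, below, hj', mul_zero, zero_mul, add_zero]
    · simp only [A, below, ih (j := j + 1) (by omega), mul_zero, add_zero]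

section Reindex

variable {R : Type*} [CommRing R]

theorem sum_range_mul_shift_succ (c : ℤ → R) (M : ℕ → R) (hc : c (-1) = 0) (n : ℕ) :
    ∑ j ∈ range n, c j * M (j + 1) = ∑ k ∈ range (n + 1), c ((k : ℤ) - 1) * M k := by
  rw [sum_range_succ']
  simp [hc]

theorem sum_range_mul_shift_pred (c : ℤ → R) (M : ℕ → R) (n : ℕ) (hc : c n = 0) :
    ∑ j ∈ range n, (j : R) * c j * M (j - 1)
      = ∑ k ∈ range n, ((k : R) + 1) * c ((k : ℤ) + 1) * M k := by
  cases n with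
  | zero => simp
  | succ n =>
    push_cast at hc
    rw [sum_range_succ', sum_range_succ]
    simp [hc]

theorem sum_range_raise_add_lower (a c : ℤ → R) (M : ℕ → R) (r : ℕ)
    (hc : ∀ j : ℤ, j < 0 ∨ (r : ℤ) < j → c j = 0) :
    ∑ j ∈ range (r + 1), c j * (a j * M (j + 1) + j * M (j - 1))
      = ∑ k ∈ range (r + 2), (a ((k : ℤ) - 1) * c ((k : ℤ) - 1) + ((k : R) + 1) * c ((k : ℤ) + 1))
          * M k := by
  have raise := sum_range_mul_shift_succ (fun j => a j * c j) M
    (by simp [hc (-1) (by omega)]) (r + 1)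
  have lower := sum_range_mul_shift_pred c M (r + 2) (hc _ (by omega))
  rw [sum_range_succ _ (r + 1)] at lower
  simp only [hc ((r + 1 : ℕ) : ℤ) (by omega), mul_zero, zero_mul, add_zero] at lower
  beta_reduce at raise
  rw [sum_congr rfl fun (k : ℕ) _ => add_mul (a ((k : ℤ) - 1) * c ((k : ℤ) - 1))
    (((k : R) + 1) * c ((k : ℤ) + 1)) (M k), sum_add_distrib, ← raise, ← lower,
    ← sum_add_distrib]
  exact sum_congr rfl fun j _ => by ring

end Reindex

noncomputable def coshSinhTerm (s j : ℕ) (t : ℝ) : ℝ := cosh t ^ ((s : ℤ) - j) * sinh t ^ j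

theorem hasDerivAt_coshSinhTerm (s j : ℕ) (t : ℝ) :
    HasDerivAt (coshSinhTerm s j)
      (((s : ℝ) - j) * coshSinhTerm s (j + 1) t + j * coshSinhTerm s (j - 1) t) t := by
  have hcosh := (hasDerivAt_zpow ((s : ℤ) - j) (cosh t) (Or.inl (cosh_pos t).ne')).comp t
    (hasDerivAt_cosh t)
  have hsinh := (hasDerivAt_pow j (sinh t)).comp t (hasDerivAt_sinh t)
  refine (hcosh.mul hsinh).congr_deriv ?_
  cases j with
  | zero => simp [coshSinhTerm]; ring
  | succ j =>
    have raise : cosh t ^ ((s : ℤ) - (j + 1 : ℕ) - 1) = cosh t ^ ((s : ℤ) - (j + 1 + 1 : ℕ)) := by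
      congr 1; push_cast; ring
    have lower : cosh t ^ ((s : ℤ) - (j + 1 : ℕ)) = cosh t ^ ((s : ℤ) - j) / cosh t := by
      rw [div_eq_mul_inv, ← zpow_sub_one₀ (cosh_pos t).ne']; congr 1; push_cast; ring
    simp only [coshSinhTerm, raise, lower, Function.comp_apply, Nat.add_sub_cancel, pow_succ]
    push_cast
    field_simp [(cosh_pos t).ne']

theorem hasDerivAt_sum_A_mul_coshSinhTerm (s r : ℕ) (t : ℝ) :
    HasDerivAt (fun u => ∑ j ∈ range (r + 1), (A s r j : ℝ) * coshSinhTerm s j u)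
      (∑ k ∈ range (r + 2), (A s (r + 1) k : ℝ) * coshSinhTerm s k t) t := by
  have hsum := HasDerivAt.fun_sum (u := range (r + 1))
    fun j _ => (hasDerivAt_coshSinhTerm s j t).const_mul (A s r j : ℝ)
  refine hsum.congr_deriv ?_
  have reindex := sum_range_raise_add_lower (fun j => (s : ℝ) - j) (fun j => (A s r j : ℝ))
    (fun k => coshSinhTerm s k t) r fun j hj => by simp [A_eq_zero s r hj]
  simp only [Int.cast_natCast] at reindex
  rw [reindex]
  refine sum_congr rfl fun k _ => ?_
  simp only [A]
  push_cast
  ring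

/-- The `r`-th derivative of `cosh(t)^s` equals `∑_{j=0}^r A(s,r,j)·cosh(t)^(s-j)·sinh(t)^j`. -/
theorem stmt4 (s r : ℕ) (t : ℝ) :
    iteratedDeriv r (fun u : ℝ => Real.cosh u ^ s) t
      = ∑ j ∈ Finset.range (r + 1),
          (A s r j : ℝ) * Real.cosh t ^ ((s : ℤ) - (j : ℤ)) * Real.sinh t ^ j := by
  have formula : ∀ r, iteratedDeriv r (fun u : ℝ => cosh u ^ s)
      = fun u => ∑ j ∈ range (r + 1), (A s r j : ℝ) * coshSinhTerm s j u := by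
    intro r
    induction r with
    | zero => funext u; simp [A, coshSinhTerm]
    | succ r ih =>
      funext u
      rw [iteratedDeriv_succ, ih]
      exact (hasDerivAt_sum_A_mul_coshSinhTerm s r u).deriv
  simp only [formula, coshSinhTerm, mul_assoc]
end

section
/- For all natural numbers s and r, Σ_{k=0}^{s} (s choose k) · (2k − s)^r = 2^s · A(s,r,0), as an identity of integers. (Equivalently, the r-th moment of the centered binomial distribution of size s equals A(s,r,0).) -/
open Polynomial

theorem Polynomial.coeff_X_mul_derivative {R : Type*} [Semiring R] (p : R[X]) (n : ℕ) :
    (X * derivative p).coeff n = n * p.coeff n := by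
  cases n with
  | zero => simp
  | succ n => rw [coeff_X_mul, coeff_derivative, ← Nat.cast_succ, Nat.cast_comm]

section HypercubeOp

variable {R : Type*} [CommRing R]

noncomputable def hypercubeOp (s : ℕ) : R[X] →ₗ[R] R[X] :=
  LinearMap.mulLeft R ((s : R[X]) * X) + LinearMap.mulLeft R (1 - X ^ 2) ∘ₗ derivative

theorem hypercubeOp_apply (s : ℕ) (p : R[X]) :
    hypercubeOp s p = (s : R[X]) * X * p + (1 - X ^ 2) * derivative p := rfl

theorem coeff_hypercubeOp_zero (s : ℕ) (p : R[X]) : (hypercubeOp s p).coeff 0 = p.coeff 1 := by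
  simp [hypercubeOp_apply, coeff_derivative]

theorem coeff_hypercubeOp_succ (s n : ℕ) (p : R[X]) :
    (hypercubeOp s p).coeff (n + 1) = ((s : R) - n) * p.coeff n + (n + 2) * p.coeff (n + 2) := by
  rw [hypercubeOp_apply, sub_mul, one_mul, pow_two, mul_assoc, mul_assoc, coeff_add, coeff_sub,
    coeff_natCast_mul, coeff_X_mul, coeff_X_mul, coeff_X_mul_derivative, coeff_derivative]
  push_cast
  ring

theorem hypercubeOp_succ_one_add_X_mul (s : ℕ) (p : R[X]) :
    hypercubeOp (s + 1) ((1 + X) * p) = (1 + X) * (hypercubeOp s p + p) := by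
  simp only [hypercubeOp_apply, derivative_mul, derivative_add, derivative_one, derivative_X]
  push_cast
  ring

theorem hypercubeOp_succ_one_sub_X_mul (s : ℕ) (p : R[X]) :
    hypercubeOp (s + 1) ((1 - X) * p) = (1 - X) * (hypercubeOp s p - p) := by
  simp only [hypercubeOp_apply, derivative_mul, derivative_sub, derivative_one, derivative_X]
  push_cast
  ring

theorem hypercubeOp_one_sub_X_pow (b : ℕ) :
    hypercubeOp b ((1 - X) ^ b : R[X]) = (-b : R) • (1 - X) ^ b := by
  induction b with
  | zero => simp [hypercubeOp_apply]
  | succ b ih =>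
    rw [pow_succ', hypercubeOp_succ_one_sub_X_mul, ih, smul_eq_C_mul, smul_eq_C_mul, map_neg,
      map_natCast, map_neg, map_natCast]
    push_cast
    ring

theorem hypercubeOp_one_add_X_pow_mul_one_sub_X_pow (a b : ℕ) :
    hypercubeOp (a + b) ((1 + X) ^ a * (1 - X) ^ b : R[X])
      = ((a : R) - b) • ((1 + X) ^ a * (1 - X) ^ b) := by
  induction a with
  | zero => simpa using hypercubeOp_one_sub_X_pow (R := R) b
  | succ a ih =>
    rw [add_right_comm, pow_succ', mul_assoc, hypercubeOp_succ_one_add_X_mul, ih]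
    simp only [smul_eq_C_mul, map_sub, map_natCast]
    push_cast
    ring

theorem hypercubeOp_pow_one_add_X_pow_mul_one_sub_X_pow (a b r : ℕ) :
    (hypercubeOp (a + b) ^ r) ((1 + X) ^ a * (1 - X) ^ b : R[X])
      = ((a : R) - b) ^ r • ((1 + X) ^ a * (1 - X) ^ b) := by
  induction r with
  | zero => simp
  | succ r ih =>
    rw [pow_succ', Module.End.mul_apply, ih, map_smul, hypercubeOp_one_add_X_pow_mul_one_sub_X_pow,
      smul_smul, pow_succ]

theorem two_pow_smul_hypercubeOp_pow_one (s r : ℕ) :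
    (2 : R) ^ s • (hypercubeOp s ^ r) (1 : R[X])
      = ∑ k ∈ Finset.range (s + 1),
          ((s.choose k : R) * (2 * k - s) ^ r) • ((1 + X : R[X]) ^ k * (1 - X) ^ (s - k)) := by
  have binomial : (2 : R) ^ s • (1 : R[X])
      = ∑ k ∈ Finset.range (s + 1), (s.choose k : R) • ((1 + X : R[X]) ^ k * (1 - X) ^ (s - k)) := by
    rw [smul_eq_C_mul, mul_one, C_pow, C_ofNat, show (2 : R[X]) = (1 + X) + (1 - X) by ring, add_pow]
    refine Finset.sum_congr rfl fun k _ => ?_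
    rw [smul_eq_C_mul, map_natCast, mul_comm]
  rw [← map_smul, binomial, map_sum]
  refine Finset.sum_congr rfl fun k hk => ?_
  obtain ⟨m, rfl⟩ := Nat.exists_eq_add_of_le (Nat.lt_succ_iff.mp (Finset.mem_range.mp hk))
  rw [Nat.add_sub_cancel_left, map_smul, hypercubeOp_pow_one_add_X_pow_mul_one_sub_X_pow, smul_smul,
    Nat.cast_add]
  ring_nf

end HypercubeOp

theorem A_of_neg (s r : ℕ) {j : ℤ} (hj : j < 0) : A s r j = 0 := by
  induction r generalizing j with
  | zero => simp [A, hj.ne]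
  | succ r ih =>
    rw [A, ih (by omega)]
    rcases (show j = -1 ∨ j + 1 < 0 by omega) with rfl | hj'
    · ring
    · rw [ih hj']
      ring

theorem A_natCast_eq_coeff (s r n : ℕ) : A s r n = ((hypercubeOp s ^ r) (1 : ℤ[X])).coeff n := by
  induction r generalizing n with
  | zero => cases n <;> simp [A, coeff_one]; omega
  | succ r ih =>
    rw [pow_succ', Module.End.mul_apply]
    cases n with
    | zero =>
      rw [coeff_hypercubeOp_zero, ← ih, A, A_of_neg s r (by norm_num)]
      simp
    | succ n =>
      rw [coeff_hypercubeOp_succ, ← ih, ← ih, A]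
      push_cast
      ring_nf

/-- The `r`-th moment of the centered binomial distribution of size `s` equals `A(s,r,0)`:
`∑_{k=0}^s C(s,k) · (2k-s)^r = 2^s · A(s,r,0)`. -/
theorem stmt7 (s r : ℕ) :
    ∑ k ∈ Finset.range (s + 1),
        (s.choose k : ℤ) * (2 * (k : ℤ) - (s : ℤ)) ^ r
      = 2 ^ s * A s r 0 := by
  have hA : A s r 0 = ((hypercubeOp s ^ r) (1 : ℤ[X])).coeff 0 := A_natCast_eq_coeff s r 0
  calc ∑ k ∈ Finset.range (s + 1), (s.choose k : ℤ) * (2 * (k : ℤ) - (s : ℤ)) ^ r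
      = eval 0 (∑ k ∈ Finset.range (s + 1),
          ((s.choose k : ℤ) * (2 * k - s) ^ r) • ((1 + X : ℤ[X]) ^ k * (1 - X) ^ (s - k))) := by
        simp [eval_finsetSum]
    _ = 2 ^ s * A s r 0 := by
        rw [← two_pow_smul_hypercubeOp_pow_one, eval_smul, ← coeff_zero_eq_eval_zero, hA,
          smul_eq_mul]
end

section
/- For all natural numbers s, r and every natural number n with 0 ≤ n ≤ ⌊r/2⌋, the following identity holds in ℚ: A(s, r, r − 2n) = Σ_{0 ≤ k ≤ j ≤ n} (s)_{r−n−j} · (r)_{2n+k} · φ(n,j,k). -/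
/-- Auxiliary array realizing the triangular field `φ` on natural-number indices. -/
def phiN : ℕ → ℕ → ℕ → ℚ
  | 0, j, k => if j = 0 ∧ k = 0 then 1 else 0
  | n + 1, j, k =>
    if k ≤ j ∧ j ≤ n + 1 then
      ((if _hk : k = 0 then 0 else ((n : ℚ) + 2 - (j : ℚ)) * phiN (n + 1) (j - 1) (k - 1))
        + ((k : ℚ) + 1) * phiN n j (k + 1) + phiN n j k) / (2 * ((n : ℚ) + 1) + (k : ℚ))
    else 0
termination_by n j k => (n, j)

/-- The triangular field `φ(n,j,k)` of rational numbers: `φ(n,j,k) = 0` unless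
`0 ≤ k ≤ j ≤ n`, `φ(0,0,0) = 1`, and for `0 ≤ k ≤ j ≤ n` with `(n,j,k) ≠ (0,0,0)`,
`(2n+k)·φ(n,j,k) = (n-j+1)·φ(n,j-1,k-1) + (k+1)·φ(n-1,j,k+1) + φ(n-1,j,k)`. -/
def phi (n j k : ℤ) : ℚ :=
  if 0 ≤ n ∧ 0 ≤ j ∧ 0 ≤ k then phiN n.toNat j.toNat k.toNat else 0


/-!
Both sides satisfy `B(r+1, n+1) = (s - r + 2n + 2) B(r, n+1) + (r - 2n) B(r, n)`, with
`B(r, 0) = (s)_r` and `B(0, n+1) = 0`. For the expansion, apply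
`(r+1)_{q+1} = (r)_{q+1} + (q+1)(r)_q` termwise and then the recursion defining `φ(n+1, j, k)`:
its first term cancels against a diagonally shifted copy of the sum, and its last two recombine
through `k (r)_{2n+k} + (r)_{2n+k+1} = (r - 2n) (r)_{2n+k}`.
-/

open Finset

theorem Nat.cast_descFactorial_succ {R : Type*} [Ring R] (x m : ℕ) :
    (x.descFactorial (m + 1) : R) = x.descFactorial m * (x - m) := by
  rw [← descPochhammer_eval_eq_descFactorial, ← descPochhammer_eval_eq_descFactorial,
    descPochhammer_succ_eval]

theorem Nat.cast_succ_descFactorial_succ_eq_add {R : Type*} [CommRing R] (r q : ℕ) :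
    ((r + 1).descFactorial (q + 1) : R)
      = r.descFactorial (q + 1) + (q + 1) * r.descFactorial q := by
  rw [Nat.succ_descFactorial_succ, Nat.cast_descFactorial_succ]
  push_cast
  ring

theorem descFactorial_mul_succ_descFactorial_succ {R : Type*} [CommRing R] (s r t q : ℕ)
    (htq : t ≤ q + 1) :
    (s.descFactorial (r + 1 - t) : R) * (r + 1).descFactorial (q + 1)
      = ((s : R) - r + t) * s.descFactorial (r - t) * r.descFactorial (q + 1)
        + (q + 1) * s.descFactorial (r + 1 - t) * r.descFactorial q := by
  rw [Nat.cast_succ_descFactorial_succ_eq_add]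
  rcases le_or_gt t r with htr | hrt
  · rw [Nat.sub_add_comm htr, Nat.cast_descFactorial_succ, Nat.cast_sub htr]
    ring
  · -- both `s`-exponents truncate to `0`, and `r < t ≤ q + 1` kills `(r)_{q+1}`
    have hvanish : r.descFactorial (q + 1) = 0 := Nat.descFactorial_of_lt (by omega)
    rw [Nat.sub_eq_zero_of_le hrt.le, Nat.sub_eq_zero_of_le hrt, hvanish]
    simp

theorem phiN_eq_zero {n j k : ℕ} (h : ¬(k ≤ j ∧ j ≤ n)) : phiN n j k = 0 := by
  cases n with
  | zero => rw [phiN, if_neg (by omega)]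
  | succ n => rw [phiN, if_neg h]

theorem phiN_zero_zero_zero : phiN 0 0 0 = 1 := by
  simp [phiN]

theorem mul_phiN_succ {m j k : ℕ} (hkj : k ≤ j) (hjm : j ≤ m + 1) :
    (2 * ((m : ℚ) + 1) + k) * phiN (m + 1) j k
      = (if k = 0 then 0 else ((m : ℚ) + 2 - j) * phiN (m + 1) (j - 1) (k - 1))
        + ((k : ℚ) + 1) * phiN m j (k + 1) + phiN m j k := by
  rw [phiN, if_pos ⟨hkj, hjm⟩, dite_eq_ite, mul_div_cancel₀ _ (by positivity)]

theorem phi_natCast (n j k : ℕ) : phi n j k = phiN n j k := by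
  simp [phi]

theorem A_eq_zero_of_lt (s : ℕ) {r : ℕ} {j : ℤ} (h : (r : ℤ) < j) : A s r j = 0 := by
  induction r generalizing j with
  | zero => rw [A, if_neg (by omega)]
  | succ r ih => rw [A, ih (by omega), ih (by omega), mul_zero, mul_zero, add_zero]

theorem A_self (s r : ℕ) : A s r r = s.descFactorial r := by
  induction r with
  | zero => simp [A]
  | succ r ih =>
    rw [A, A_eq_zero_of_lt s (by omega : (r : ℤ) < (r + 1 : ℕ) + 1),
      Nat.cast_descFactorial_succ]
    push_cast
    rw [add_sub_cancel_right, ih]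
    ring

theorem A_sub_two_mul_succ (s r m : ℕ) :
    A s (r + 1) ((r + 1 : ℕ) - 2 * (m + 1 : ℕ))
      = ((s : ℤ) - r + 2 * m + 2) * A s r (r - 2 * (m + 1 : ℕ))
        + ((r : ℤ) - 2 * m) * A s r (r - 2 * m) := by
  rw [A]
  push_cast
  ring_nf

def phiExpansion (s r n : ℕ) : ℚ :=
  ∑ j ∈ range (n + 1), ∑ k ∈ range (j + 1),
    (s.descFactorial (r - n - j) : ℚ) * r.descFactorial (2 * n + k) * phiN n j k

theorem phiExpansion_zero_succ (s n : ℕ) : phiExpansion s 0 (n + 1) = 0 := by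
  refine sum_eq_zero fun j _ => sum_eq_zero fun k _ => ?_
  rw [Nat.descFactorial_of_lt (by omega : 0 < 2 * (n + 1) + k)]
  simp

theorem phiExpansion_zero_right (s r : ℕ) : phiExpansion s r 0 = s.descFactorial r := by
  simp [phiExpansion, phiN_zero_zero_zero]

theorem Finset.sum_range_shift_eq_of_eq_zero {M : Type*} [AddCommMonoid M] (f : ℕ → M) (n : ℕ)
    (h0 : f 0 = 0) (hn : f n = 0) : ∑ k ∈ range n, f (k + 1) = ∑ k ∈ range n, f k := by
  have h := sum_range_succ' f n
  rwa [sum_range_succ, h0, hn, add_zero, add_zero, eq_comm] at h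

theorem Finset.sum_triangle_ite_eq_sum_triangle_succ_succ {M : Type*} [AddCommMonoid M]
    (g : ℕ → ℕ → M) (N : ℕ) :
    ∑ j ∈ range (N + 1), ∑ k ∈ range (j + 1), (if k = 0 then 0 else g j k)
      = ∑ j ∈ range N, ∑ k ∈ range (j + 1), g (j + 1) (k + 1) := by
  simp only [sum_range_succ' _ N, sum_range_succ' _ (_ + 1)]
  simp

section Recursion

variable (s r m : ℕ)

theorem sum_mul_phiN_diagonal :
    ∑ j ∈ range (m + 2), ∑ k ∈ range (j + 1),
        (s.descFactorial (r - m - j) : ℚ) * r.descFactorial (2 * m + 1 + k)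
          * (if k = 0 then 0 else ((m : ℚ) + 2 - j) * phiN (m + 1) (j - 1) (k - 1))
      = ∑ j ∈ range (m + 2), ∑ k ∈ range (j + 1), ((m : ℚ) + 1 - j)
          * ((s.descFactorial (r - (m + 1) - j) : ℚ) * r.descFactorial (2 * (m + 1) + k)
            * phiN (m + 1) j k) := by
  simp only [mul_ite, mul_zero, sum_triangle_ite_eq_sum_triangle_succ_succ]
  rw [sum_range_succ _ (m + 1)]
  simp only [Nat.cast_add, Nat.cast_one, sub_self, zero_mul, sum_const_zero, add_zero,
    Nat.add_sub_cancel]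
  refine sum_congr rfl fun j _ => sum_congr rfl fun k _ => ?_
  rw [show r - m - (j + 1) = r - (m + 1) - j by omega,
    show 2 * m + 1 + (k + 1) = 2 * (m + 1) + k by omega]
  ring

theorem sum_mul_phiN_pred :
    ∑ j ∈ range (m + 2), ∑ k ∈ range (j + 1),
        (s.descFactorial (r - m - j) : ℚ) * r.descFactorial (2 * m + 1 + k)
          * (((k : ℚ) + 1) * phiN m j (k + 1) + phiN m j k)
      = ((r : ℚ) - 2 * m) * phiExpansion s r m := by
  have hrow : ∀ j, ∑ k ∈ range (j + 1),
        (s.descFactorial (r - m - j) : ℚ) * r.descFactorial (2 * m + 1 + k)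
          * (((k : ℚ) + 1) * phiN m j (k + 1) + phiN m j k)
      = ((r : ℚ) - 2 * m) * ∑ k ∈ range (j + 1),
          (s.descFactorial (r - m - j) : ℚ) * r.descFactorial (2 * m + k) * phiN m j k := by
    intro j
    set f : ℕ → ℚ := fun k =>
      k * s.descFactorial (r - m - j) * r.descFactorial (2 * m + k) * phiN m j k with hf
    have hshift : ∑ k ∈ range (j + 1), f (k + 1) = ∑ k ∈ range (j + 1), f k :=
      sum_range_shift_eq_of_eq_zero f (j + 1) (by simp [hf]) (by simp [hf, phiN_eq_zero])
    calc _ = ∑ k ∈ range (j + 1), (f (k + 1) + (s.descFactorial (r - m - j) : ℚ)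
              * r.descFactorial (2 * m + 1 + k) * phiN m j k) := by
          refine sum_congr rfl fun k _ => ?_
          simp only [hf]
          rw [show 2 * m + (k + 1) = 2 * m + 1 + k by omega]
          push_cast
          ring
      _ = ∑ k ∈ range (j + 1), (f k + (s.descFactorial (r - m - j) : ℚ)
              * r.descFactorial (2 * m + 1 + k) * phiN m j k) := by
          rw [sum_add_distrib, hshift, sum_add_distrib]
      _ = _ := by
          rw [mul_sum]
          refine sum_congr rfl fun k _ => ?_
          simp only [hf]
          rw [show 2 * m + 1 + k = 2 * m + k + 1 by omega, Nat.cast_descFactorial_succ]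
          push_cast
          ring
  rw [sum_congr rfl fun j _ => hrow j, ← mul_sum, sum_range_succ _ (m + 1)]
  simp [phiExpansion, phiN_eq_zero]

theorem phiExpansion_succ_succ :
    phiExpansion s (r + 1) (m + 1)
      = ((s : ℚ) - r + 2 * m + 2) * phiExpansion s r (m + 1)
        + ((r : ℚ) - 2 * m) * phiExpansion s r m := by
  have hterm : ∀ j ∈ range (m + 2), ∀ k ∈ range (j + 1),
      (s.descFactorial (r + 1 - (m + 1) - j) : ℚ) * (r + 1).descFactorial (2 * (m + 1) + k)
          * phiN (m + 1) j k
        = ((s : ℚ) - r + 2 * m + 2) * ((s.descFactorial (r - (m + 1) - j) : ℚ)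
            * r.descFactorial (2 * (m + 1) + k) * phiN (m + 1) j k)
          - ((m : ℚ) + 1 - j) * ((s.descFactorial (r - (m + 1) - j) : ℚ)
            * r.descFactorial (2 * (m + 1) + k) * phiN (m + 1) j k)
          + (s.descFactorial (r - m - j) : ℚ) * r.descFactorial (2 * m + 1 + k)
            * (if k = 0 then 0 else ((m : ℚ) + 2 - j) * phiN (m + 1) (j - 1) (k - 1))
          + (s.descFactorial (r - m - j) : ℚ) * r.descFactorial (2 * m + 1 + k)
            * (((k : ℚ) + 1) * phiN m j (k + 1) + phiN m j k) := by
    intro j hj k hk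
    rw [mem_range] at hj hk
    have hdesc := descFactorial_mul_succ_descFactorial_succ (R := ℚ) s r (m + 1 + j)
      (2 * m + 1 + k) (by omega)
    rw [show r + 1 - (m + 1 + j) = r - m - j by omega,
      show r - (m + 1 + j) = r - (m + 1) - j by omega,
      show 2 * m + 1 + k + 1 = 2 * (m + 1) + k by omega] at hdesc
    rw [show r + 1 - (m + 1) - j = r - m - j by omega, hdesc]
    push_cast
    linear_combination (s.descFactorial (r - m - j) : ℚ) * r.descFactorial (2 * m + 1 + k)
      * mul_phiN_succ (by omega : k ≤ j) (by omega : j ≤ m + 1)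
  rw [phiExpansion, sum_congr rfl fun j hj => sum_congr rfl (hterm j hj)]
  simp only [sum_add_distrib, sum_sub_distrib]
  rw [sum_mul_phiN_diagonal, sum_mul_phiN_pred]
  simp only [phiExpansion, ← mul_sum]
  ring

end Recursion

theorem A_sub_two_mul_eq_phiExpansion (s r n : ℕ) :
    (A s r (r - 2 * n) : ℚ) = phiExpansion s r n := by
  induction r generalizing n with
  | zero =>
    rcases n with _ | n
    · simp [A, phiExpansion_zero_right]
    · rw [phiExpansion_zero_succ, A, if_neg (by omega), Int.cast_zero]
  | succ r ih =>
    rcases n with _ | m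
    · rw [phiExpansion_zero_right, Nat.cast_zero, mul_zero, sub_zero, A_self, Int.cast_natCast]
    · rw [A_sub_two_mul_succ, phiExpansion_succ_succ, ← ih, ← ih]
      push_cast
      ring

theorem stmt8_general (s r n : ℕ) :
    (A s r ((r : ℤ) - 2 * (n : ℤ)) : ℚ)
      = ∑ j ∈ Finset.range (n + 1), ∑ k ∈ Finset.range (j + 1),
          (s.descFactorial (r - n - j) : ℚ) * (r.descFactorial (2 * n + k) : ℚ)
            * phi (n : ℤ) (j : ℤ) (k : ℤ) := by
  simp only [A_sub_two_mul_eq_phiExpansion, phiExpansion, phi_natCast]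

/-- Expansion of the condensed array `B(s,r,n) = A(s,r,r-2n)` in terms of falling factorials:
`A(s,r,r-2n) = ∑_{0 ≤ k ≤ j ≤ n} (s)_{r-n-j} · (r)_{2n+k} · φ(n,j,k)`. -/
theorem stmt8 (s r n : ℕ) (hn : n ≤ r / 2) :
    (A s r ((r : ℤ) - 2 * (n : ℤ)) : ℚ)
      = ∑ j ∈ Finset.range (n + 1), ∑ k ∈ Finset.range (j + 1),
          (s.descFactorial (r - n - j) : ℚ) * (r.descFactorial (2 * n + k) : ℚ)
            * phi (n : ℤ) (j : ℤ) (k : ℤ) :=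
  stmt8_general s r n
end

section
/- For all natural numbers n ≥ λ ≥ 0: φ(n, n−λ, 0) = Σ_{π ∈ 𝒫_{n,λ}} ( Π_{k=1}^{n} π(k)! · ((2k)!)^{π(k)} )^{−1}, as an identity of rational numbers. -/
/-!
`φ(n, j, k)` is the coefficient of `x^(2n+k)` in
`(cosh x - 1)^(n-j) / (n-j)! * (sinh x - x)^k / k!`: differentiating this product, with
`(cosh x - 1)' = (sinh x - x) + x` and `(sinh x - x)' = cosh x - 1`, and comparing coefficients
gives exactly the defining recurrence. For `k = 0` and `n - j = λ` this is the coefficient of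
`y^n` in `c(y)^λ / λ!` with `c(y) = cosh √y - 1 = ∑_{a ≥ 1} y^a / (2a)!`, and the exponential
formula expands that coefficient as the sum over partitions of `n` into `λ` parts.
-/

open PowerSeries Finset
open scoped Nat

section DividedPower

variable {K : Type*} [Field K]

noncomputable def dividedPower (f : K⟦X⟧) (l : ℕ) : K⟦X⟧ := C (l ! : K)⁻¹ * f ^ l

@[simp]
lemma dividedPower_zero (f : K⟦X⟧) : dividedPower f 0 = 1 := by
  simp [dividedPower]

lemma inv_factorial_succ_mul [CharZero K] (m : ℕ) :
    ((m + 1)! : K)⁻¹ * (m + 1) = (m ! : K)⁻¹ := by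
  rw [Nat.factorial_succ, Nat.cast_mul, mul_inv, Nat.cast_succ, mul_comm, ← mul_assoc,
    mul_inv_cancel₀ (Nat.cast_add_one_ne_zero m), one_mul]

lemma mul_dividedPower [CharZero K] (f : K⟦X⟧) (l : ℕ) :
    f * dividedPower f l = C ((l : K) + 1) * dividedPower f (l + 1) := by
  rw [dividedPower, dividedPower, ← inv_factorial_succ_mul, map_mul, pow_succ]
  ring

lemma derivative_dividedPower_succ [CharZero K] (f : K⟦X⟧) (l : ℕ) :
    d⁄dX K (dividedPower f (l + 1)) = d⁄dX K f * dividedPower f l := by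
  rw [dividedPower, dividedPower, Derivation.leibniz, derivative_C, smul_zero, add_zero,
    derivative_pow, smul_eq_mul, ← inv_factorial_succ_mul (K := K) l, map_mul,
    Nat.add_sub_cancel, map_add, map_natCast, map_one, Nat.cast_succ]
  ring

lemma X_pow_mul_dvd_dividedPower {f : K⟦X⟧} {m : ℕ} (h : X ^ m ∣ f) (l : ℕ) :
    X ^ (m * l) ∣ dividedPower f l :=
  Dvd.dvd.mul_left (pow_mul (X : K⟦X⟧) m l ▸ pow_dvd_pow_of_dvd h l) _

lemma map_dividedPower (g : K⟦X⟧ →ₐ[K] K⟦X⟧) (f : K⟦X⟧) (l : ℕ) :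
    g (dividedPower f l) = dividedPower (g f) l := by
  rw [dividedPower, dividedPower, map_mul, map_pow, C_eq_algebraMap, AlgHom.commutes]

end DividedPower

section ExponentialFormula

variable {K : Type*} [Field K]

noncomputable def exponentialWeight (w : ℕ → K) (s : Multiset ℕ) : K :=
  ∏ k ∈ s.toFinset, w k ^ s.count k / (s.count k)!

lemma exponentialWeight_eq_prod_of_subset (w : ℕ → K) {s : Multiset ℕ} {D : Finset ℕ}
    (h : s.toFinset ⊆ D) :
    exponentialWeight w s = ∏ k ∈ D, w k ^ s.count k / (s.count k)! := by
  refine prod_subset h fun k _ hk => ?_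
  rw [Multiset.count_eq_zero.2 (by simpa using hk)]
  simp

lemma count_mul_exponentialWeight [CharZero K] (w : ℕ → K) {s : Multiset ℕ} {p : ℕ}
    (hp : p ∈ s) :
    (s.count p : K) * exponentialWeight w s = w p * exponentialWeight w (s.erase p) := by
  have hps : p ∈ s.toFinset := Multiset.mem_toFinset.2 hp
  have hrest : ∏ k ∈ s.toFinset.erase p, w k ^ (s.erase p).count k / ((s.erase p).count k)!
      = ∏ k ∈ s.toFinset.erase p, w k ^ s.count k / (s.count k)! :=
    prod_congr rfl fun k hk => by rw [Multiset.count_erase_of_ne (ne_of_mem_erase hk)]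
  obtain ⟨c, hc⟩ := Nat.exists_eq_add_one_of_ne_zero (Multiset.count_ne_zero.2 hp)
  have hfactor : ((c + 1 : ℕ) : K) * (w p ^ (c + 1) / (c + 1)!) = w p * (w p ^ c / c !) := by
    rw [Nat.factorial_succ, Nat.cast_mul, pow_succ]
    field_simp
  rw [exponentialWeight, exponentialWeight_eq_prod_of_subset w
      (Multiset.toFinset_subset.2 (Multiset.erase_subset p s)),
    ← mul_prod_erase _ _ hps, ← mul_prod_erase _ _ hps, hrest, Multiset.count_erase_self, hc,
    Nat.add_sub_cancel, ← mul_assoc, ← mul_assoc, hfactor]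

def partitionsWithParts (n l : ℕ) : Finset n.Partition :=
  univ.filter fun π => π.parts.card = l

noncomputable def partitionWeightSum (w : ℕ → K) (n l : ℕ) : K :=
  ∑ π ∈ partitionsWithParts n l, exponentialWeight w π.parts

lemma sum_count_mul_exponentialWeight [CharZero K] (w : ℕ → K) {n p : ℕ} (hp : 1 ≤ p)
    (hpn : p ≤ n) (l : ℕ) :
    ∑ π ∈ partitionsWithParts n (l + 1), (π.parts.count p : K) * exponentialWeight w π.parts
      = w p * partitionWeightSum w (n - p) l := by
  let e := Nat.Partition.partitionWithPartEquiv hp hpn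
  have mem_of_ne {π : n.Partition}
      (h : (π.parts.count p : K) * exponentialWeight w π.parts ≠ 0) : p ∈ π.parts :=
    Multiset.count_ne_zero.1 fun h0 => h (by simp [h0])
  rw [partitionWeightSum, mul_sum]
  refine sum_bij_ne_zero (fun π _ h => e ⟨π, mem_of_ne h⟩) ?_ ?_ ?_ ?_
  · intro π hπ h
    simp only [partitionsWithParts, mem_filter, mem_univ, true_and] at hπ ⊢
    simp [e, Multiset.card_erase_of_mem (mem_of_ne h), hπ]
  · intro π₁ _ h₁ π₂ _ h₂ heq
    exact congrArg Subtype.val (e.injective heq)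
  · intro μ hμ hg
    simp only [partitionsWithParts, mem_filter, mem_univ, true_and] at hμ
    refine ⟨(e.symm μ).1, ?_, ?_, by simp⟩
    · simp [partitionsWithParts, e, hμ]
    · rw [count_mul_exponentialWeight w (by simp [e])]
      simpa [e] using hg
  · intro π _ h
    simp [e, count_mul_exponentialWeight w (mem_of_ne h)]

lemma Nat.Partition.parts_toFinset_subset_Icc {n : ℕ} (π : n.Partition) :
    π.parts.toFinset ⊆ Icc 1 n := fun p hp => by
  rw [Multiset.mem_toFinset] at hp
  exact mem_Icc.2 ⟨π.parts_pos hp, π.le_of_mem_parts hp⟩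

lemma card_parts_eq_sum_count {n : ℕ} (π : n.Partition) :
    π.parts.card = ∑ p ∈ Icc 1 n, π.parts.count p := by
  rw [← Multiset.toFinset_sum_count_eq]
  exact sum_subset π.parts_toFinset_subset_Icc fun p _ hp =>
    Multiset.count_eq_zero.2 (by simpa using hp)

lemma succ_mul_partitionWeightSum [CharZero K] (w : ℕ → K) (n l : ℕ) :
    ((l : K) + 1) * partitionWeightSum w n (l + 1)
      = ∑ p ∈ Icc 1 n, w p * partitionWeightSum w (n - p) l := by
  have hcard : ∀ π ∈ partitionsWithParts n (l + 1),
      ((l : K) + 1) * exponentialWeight w π.parts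
        = ∑ p ∈ Icc 1 n, (π.parts.count p : K) * exponentialWeight w π.parts := by
    intro π hπ
    simp only [partitionsWithParts, mem_filter, mem_univ, true_and] at hπ
    rw [← sum_mul, ← Nat.cast_sum, ← card_parts_eq_sum_count, hπ, Nat.cast_succ]
  rw [partitionWeightSum, mul_sum, sum_congr rfl hcard, sum_comm]
  exact sum_congr rfl fun p hp =>
    sum_count_mul_exponentialWeight w (mem_Icc.1 hp).1 (mem_Icc.1 hp).2 l

lemma partitionWeightSum_zero (w : ℕ → K) (n : ℕ) :
    partitionWeightSum w n 0 = if n = 0 then 1 else 0 := by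
  rcases n with _ | n
  · simp [partitionWeightSum, partitionsWithParts, exponentialWeight]
  · refine sum_eq_zero fun π hπ => absurd π.parts_sum ?_
    simp only [partitionsWithParts, mem_filter, mem_univ, true_and, Multiset.card_eq_zero] at hπ
    simp [hπ]

theorem partitionWeightSum_eq_coeff_dividedPower [CharZero K] (f : K⟦X⟧)
    (hf : constantCoeff f = 0) (n l : ℕ) :
    partitionWeightSum (coeff · f) n l = coeff n (dividedPower f l) := by
  induction l generalizing n with
  | zero => simp [partitionWeightSum_zero, coeff_one]
  | succ l ih =>
    refine mul_left_cancel₀ (Nat.cast_add_one_ne_zero (R := K) l) ?_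
    rw [succ_mul_partitionWeightSum, ← coeff_C_mul, ← mul_dividedPower, coeff_mul,
      Finset.Nat.sum_antidiagonal_eq_sum_range_succ_mk, range_eq_Ico,
      sum_eq_sum_Ico_succ_bot n.succ_pos, coeff_zero_eq_constantCoeff_apply, hf, zero_mul, zero_add]
    exact sum_congr rfl fun p _ => by rw [ih]

end ExponentialFormula

noncomputable def coshSeries : ℚ⟦X⟧ := mk fun m => if Even m then (m ! : ℚ)⁻¹ else 0

noncomputable def sinhSeries : ℚ⟦X⟧ := mk fun m => if Even m then 0 else (m ! : ℚ)⁻¹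

lemma derivative_coshSeries : d⁄dX ℚ coshSeries = sinhSeries := by
  ext m
  simp only [coeff_derivative, coshSeries, sinhSeries, coeff_mk, Nat.even_add_one, ite_not,
    ite_mul, zero_mul, inv_factorial_succ_mul]

lemma derivative_sinhSeries : d⁄dX ℚ sinhSeries = coshSeries := by
  ext m
  simp only [coeff_derivative, coshSeries, sinhSeries, coeff_mk, Nat.even_add_one, ite_not,
    ite_mul, zero_mul, inv_factorial_succ_mul]

lemma X_sq_dvd_coshSeries_sub_one : X ^ 2 ∣ coshSeries - 1 := by
  refine X_pow_dvd_iff.2 fun m hm => ?_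
  interval_cases m <;> simp [coshSeries, coeff_one]

lemma X_pow_three_dvd_sinhSeries_sub_X : X ^ 3 ∣ sinhSeries - X := by
  refine X_pow_dvd_iff.2 fun m hm => ?_
  interval_cases m <;> simp [sinhSeries, coeff_X]

noncomputable def coshSinhPower (l k : ℕ) : ℚ⟦X⟧ :=
  dividedPower (coshSeries - 1) l * dividedPower (sinhSeries - X) k

lemma derivative_coshSinhPower (l k : ℕ) :
    d⁄dX ℚ (coshSinhPower l k)
      = (if l = 0 then 0
          else C ((k : ℚ) + 1) * coshSinhPower (l - 1) (k + 1) + X * coshSinhPower (l - 1) k)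
        + if k = 0 then 0 else C ((l : ℚ) + 1) * coshSinhPower (l + 1) (k - 1) := by
  have hcosh : d⁄dX ℚ (coshSeries - 1) = (sinhSeries - X) + X := by
    rw [map_sub, derivative_coshSeries, Derivation.map_one_eq_zero, sub_zero, sub_add_cancel]
  have hsinh : d⁄dX ℚ (sinhSeries - X) = coshSeries - 1 := by
    rw [map_sub, derivative_sinhSeries, derivative_X]
  rw [coshSinhPower, Derivation.leibniz, smul_eq_mul, smul_eq_mul, add_comm]
  congr 1
  · rcases l with _ | l
    · simp
    · rw [derivative_dividedPower_succ, hcosh, if_neg l.succ_ne_zero, Nat.add_sub_cancel,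
        coshSinhPower, coshSinhPower]
      linear_combination dividedPower (coshSeries - 1) l * mul_dividedPower (sinhSeries - X) k
  · rcases k with _ | k
    · simp
    · rw [derivative_dividedPower_succ, hsinh, if_neg k.succ_ne_zero, Nat.add_sub_cancel,
        coshSinhPower]
      linear_combination dividedPower (sinhSeries - X) k * mul_dividedPower (coshSeries - 1) l

lemma coeff_coshSinhPower_eq_zero {n l k : ℕ} (h : n < l + k) :
    coeff (2 * n + k) (coshSinhPower l k) = 0 := by
  have hdvd : X ^ (2 * l + 3 * k) ∣ coshSinhPower l k := by
    rw [pow_add]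
    exact mul_dvd_mul (X_pow_mul_dvd_dividedPower X_sq_dvd_coshSeries_sub_one l)
      (X_pow_mul_dvd_dividedPower X_pow_three_dvd_sinhSeries_sub_X k)
  exact X_pow_dvd_iff.1 hdvd _ (by omega)

lemma coeff_coshSinhPower_succ (n l k : ℕ) :
    (2 * ((n : ℚ) + 1) + k) * coeff (2 * (n + 1) + k) (coshSinhPower l k)
      = (if k = 0 then 0
          else ((l : ℚ) + 1) * coeff (2 * (n + 1) + (k - 1)) (coshSinhPower (l + 1) (k - 1)))
        + if l = 0 then 0
          else ((k : ℚ) + 1) * coeff (2 * n + (k + 1)) (coshSinhPower (l - 1) (k + 1))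
            + coeff (2 * n + k) (coshSinhPower (l - 1) k) := by
  calc (2 * ((n : ℚ) + 1) + k) * coeff (2 * (n + 1) + k) (coshSinhPower l k)
      = coeff (2 * n + k + 1) (d⁄dX ℚ (coshSinhPower l k)) := by
        rw [coeff_derivative, show 2 * n + k + 1 + 1 = 2 * (n + 1) + k by ring]
        push_cast
        ring
    _ = _ := by
        rw [derivative_coshSinhPower, map_add, add_comm]
        congr 1
        · split_ifs with hk
          · simp
          · rw [coeff_C_mul, show 2 * n + k + 1 = 2 * (n + 1) + (k - 1) by omega]
        · split_ifs with hl
          · simp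
          · rw [map_add, coeff_C_mul, coeff_succ_X_mul,
              show 2 * n + k + 1 = 2 * n + (k + 1) by ring]

lemma phiN_eq_coeff (n j k : ℕ) :
    phiN n j k = if j ≤ n then coeff (2 * n + k) (coshSinhPower (n - j) k) else 0 := by
  induction n, j, k using phiN.induct with
  | case1 j k h =>
    obtain ⟨rfl, rfl⟩ := h
    simp [phiN, coshSinhPower]
  | case2 j k h =>
    rw [phiN, if_neg h]
    split_ifs with hj
    · exact (coeff_coshSinhPower_eq_zero (by omega)).symm
    · rfl
  | case3 n j k hcond ih1 ih2 ih3 =>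
    obtain ⟨hkj, hjn⟩ := hcond
    rw [phiN, if_pos ⟨hkj, hjn⟩, if_pos hjn, div_eq_iff (by positivity),
      mul_comm _ (2 * ((n : ℚ) + 1) + k), coeff_coshSinhPower_succ, add_assoc]
    congr 1
    · by_cases hk : k = 0
      · rw [dif_pos hk, if_pos hk]
      · rw [dif_neg hk, if_neg hk, ih1 hk, if_pos (by omega),
          show n + 1 - (j - 1) = n + 1 - j + 1 by omega, Nat.cast_sub hjn]
        push_cast
        ring
    · rw [ih2, ih3]
      by_cases hj : j ≤ n
      · rw [if_pos hj, if_pos hj, if_neg (by omega), show n + 1 - j - 1 = n - j by omega]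
      · rw [if_neg hj, if_neg hj, if_pos (by omega)]
        ring
  | case4 n j k h =>
    rw [phiN, if_neg h]
    split_ifs with hj
    · exact (coeff_coshSinhPower_eq_zero (by omega)).symm
    · rfl

noncomputable def coshSqrtSubOne : ℚ⟦X⟧ := mk (fun a => ((2 * a)! : ℚ)⁻¹) - 1

lemma coshSeries_sub_one_eq_expand : coshSeries - 1 = expand 2 two_ne_zero coshSqrtSubOne := by
  rw [coshSqrtSubOne, map_sub, map_one, sub_left_inj]
  ext m
  rw [coeff_expand, coshSeries, coeff_mk, coeff_mk]
  by_cases h : 2 ∣ m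
  · rw [if_pos (even_iff_two_dvd.2 h), if_pos h, Nat.mul_div_cancel' h]
  · rw [if_neg (mt even_iff_two_dvd.1 h), if_neg h]

lemma coeff_dividedPower_coshSeries_sub_one (n l : ℕ) :
    coeff (2 * n) (dividedPower (coshSeries - 1) l) = coeff n (dividedPower coshSqrtSubOne l) := by
  rw [coshSeries_sub_one_eq_expand, ← map_dividedPower, coeff_expand_mul]

lemma exponentialWeight_coeff_coshSqrtSubOne {n : ℕ} (π : n.Partition) :
    exponentialWeight (coeff · coshSqrtSubOne) π.parts
      = (∏ k ∈ Icc 1 n, ((π.parts.count k)! : ℚ) * ((2 * k)! : ℚ) ^ π.parts.count k)⁻¹ := by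
  rw [exponentialWeight_eq_prod_of_subset _ π.parts_toFinset_subset_Icc, ← prod_inv_distrib]
  refine prod_congr rfl fun k hk => ?_
  rw [coshSqrtSubOne, map_sub, coeff_mk, coeff_one, if_neg (Nat.pos_iff_ne_zero.1 (mem_Icc.1 hk).1),
    sub_zero, inv_pow, div_eq_mul_inv, mul_inv, mul_comm]

/-- `φ(n, n-λ, 0) = ∑_{π ∈ 𝒫_{n,λ}} (∏_{k=1}^{n} π(k)!·((2k)!)^{π(k)})⁻¹` for `n ≥ λ ≥ 0`,
where `𝒫_{n,λ}` is the set of partitions of `n` with `λ` parts and `π(k)` is the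
frequency (multiplicity) of the part `k` in `π`. -/
theorem stmt17 (n l : ℕ) (hl : l ≤ n) :
    phi (n : ℤ) ((n : ℤ) - (l : ℤ)) 0
      = ∑ π ∈ Finset.univ.filter (fun π : Nat.Partition n => Multiset.card π.parts = l),
          (∏ k ∈ Finset.Icc 1 n,
            (Nat.factorial (Multiset.count k π.parts) : ℚ)
              * (Nat.factorial (2 * k) : ℚ) ^ (Multiset.count k π.parts))⁻¹ := by
  have hphi : phi n (n - l) 0 = phiN n (n - l) 0 := by
    rw [phi, if_pos (by omega)]
    congr; omega
  rw [hphi, phiN_eq_coeff, if_pos (Nat.sub_le n l), Nat.sub_sub_self hl, add_zero, coshSinhPower,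
    dividedPower_zero, mul_one, coeff_dividedPower_coshSeries_sub_one,
    ← partitionWeightSum_eq_coeff_dividedPower _ (by simp [coshSqrtSubOne])]
  exact sum_congr rfl fun π _ => exponentialWeight_coeff_coshSqrtSubOne π
end
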